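/- Let M be a MAG over V = {X, Y} ∪ O satisfying the pretreatment setup. Then rules R1 and R2 cannot both apply: if there exist S ∈ MB(X) \ {Y} and Z ⊆ MB(Y) \ {X} with S and Y m-connected given Z and m-separated by Z ∪ {X}, then there is no pair (S', Z') with S' ∈ MB(X) \ {Y} and Z' ⊆ MB(Y) \ {X} such that X and Y are m-separated by Z', or such that S' and X are m-connected given Z' while S' and Y are m-separated by Z'. (Mutual exclusivity of the two rules used by the LSAS algorithm, following from Theorems 2 and 3.) -/

import Mathlib

namespace CausalGraph

/-- A directed mixed graph: directed edges `dir a b` (a → b) and bidirected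
edges `bidir a b` (a ↔ b), with at most one edge between any two vertices
and no self-loops. -/
structure MixedGraph (V : Type*) where
  dir : V → V → Prop
  bidir : V → V → Prop
  bidir_symm : ∀ a b, bidir a b → bidir b a
  dir_irrefl : ∀ a, ¬ dir a a
  bidir_irrefl : ∀ a, ¬ bidir a a
  dir_not_dir : ∀ a b, dir a b → ¬ dir b a
  dir_not_bidir : ∀ a b, dir a b → ¬ bidir a b

variable {V : Type*}

/-- Two vertices are adjacent if there is an edge (of any kind) between them. -/
def MixedGraph.adj (G : MixedGraph V) (a b : V) : Prop :=
  G.dir a b ∨ G.dir b a ∨ G.bidir a b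

/-- There is an edge between `a` and `b` with an arrowhead at `b`. -/
def ArrowInto (G : MixedGraph V) (a b : V) : Prop :=
  G.dir a b ∨ G.bidir a b

/-- `p` is a path between `a` and `b`: a list of distinct vertices, each
consecutive pair adjacent, starting at `a` and ending at `b`. -/
def IsPathBetween (G : MixedGraph V) (p : List V) (a b : V) : Prop :=
  List.Chain' G.adj p ∧ p.Nodup ∧ p.head? = some a ∧ p.getLast? = some b ∧ 2 ≤ p.length

/-- `p` is a directed path from `a` to `b`: all edges are directed edges
pointing toward `b`. -/
def IsDirectedPath (G : MixedGraph V) (p : List V) (a b : V) : Prop :=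
  List.Chain' G.dir p ∧ p.Nodup ∧ p.head? = some a ∧ p.getLast? = some b ∧ 2 ≤ p.length

/-- `a` is an ancestor of `b` (and `b` a descendant of `a`): `a = b` or there
is a directed path from `a` to `b`. -/
def Ancestor (G : MixedGraph V) (a b : V) : Prop :=
  a = b ∨ ∃ p, IsDirectedPath G p a b

/-- `w` is an intermediate (non-endpoint) vertex of the path `p`. -/
def IsIntermediateOn (p : List V) (w : V) : Prop :=
  ∃ (u v : V) (l₁ l₂ : List V), p = l₁ ++ u :: w :: v :: l₂

/-- `w` is a collider on the path `p`: both edges of the path at `w` have an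
arrowhead at `w`. -/
def IsColliderOn (G : MixedGraph V) (p : List V) (w : V) : Prop :=
  ∃ (u v : V) (l₁ l₂ : List V), p = l₁ ++ u :: w :: v :: l₂ ∧
    ArrowInto G u w ∧ ArrowInto G v w

/-- `w` is a non-collider intermediate vertex on the path `p`. -/
def IsNonColliderOn (G : MixedGraph V) (p : List V) (w : V) : Prop :=
  IsIntermediateOn p w ∧ ¬ IsColliderOn G p w

/-- The path `p` between `a` and `b` (with `a, b ∉ Z`) is m-connecting given
`Z`: every non-collider on it is not in `Z`, and every collider on it has a
descendant in `Z`. -/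
def MConnPath (G : MixedGraph V) (Z : Set V) (p : List V) (a b : V) : Prop :=
  IsPathBetween G p a b ∧ a ∉ Z ∧ b ∉ Z ∧
    (∀ w, IsNonColliderOn G p w → w ∉ Z) ∧
    (∀ w, IsColliderOn G p w → ∃ d ∈ Z, Ancestor G w d)

/-- `a` and `b` are m-separated by `Z`: no path between them is m-connecting
given `Z`. -/
def MSep (G : MixedGraph V) (Z : Set V) (a b : V) : Prop :=
  ∀ p, ¬ MConnPath G Z p a b

/-- `a` and `b` are m-connected given `Z`. -/
def MConn (G : MixedGraph V) (Z : Set V) (a b : V) : Prop :=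
  ∃ p, MConnPath G Z p a b

/-- Set version of m-separation: every vertex of `A` is m-separated from every
vertex of `B` by `Z`. -/
def MSepSets (G : MixedGraph V) (Z A B : Set V) : Prop :=
  ∀ a ∈ A, ∀ b ∈ B, MSep G Z a b

/-- `G` is a maximal ancestral graph (MAG): it is ancestral (no directed or
almost directed cycles), and every pair of distinct non-adjacent vertices is
m-separated by some set of vertices. -/
def IsMAG (G : MixedGraph V) : Prop :=
  (∀ a b, G.dir a b → ¬ Ancestor G b a) ∧
  (∀ a b, G.bidir a b → ¬ Ancestor G a b) ∧
  (∀ a b, a ≠ b → ¬ G.adj a b → ∃ Z : Set V, a ∉ Z ∧ b ∉ Z ∧ MSep G Z a b)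

/-- `p` is a collider path between `a` and `b`: every intermediate vertex is a
collider on it. -/
def IsColliderPathBetween (G : MixedGraph V) (p : List V) (a b : V) : Prop :=
  IsPathBetween G p a b ∧ ∀ w, IsIntermediateOn p w → IsColliderOn G p w

/-- The Markov blanket of `y`: all vertices adjacent to `y`, together with all
vertices non-adjacent to `y` joined to `y` by a collider path. -/
def MarkovBlanket (G : MixedGraph V) (y : V) : Set V :=
  {v | v ≠ y ∧ (G.adj v y ∨ (¬ G.adj v y ∧ ∃ p, IsColliderPathBetween G p v y))}

/-- The directed edge `x → y` is visible: there is a vertex `s` not adjacent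
to `y` such that either there is an edge between `s` and `x` with an arrowhead
at `x`, or there is a collider path from `s` to `x` with an arrowhead at `x`
all of whose intermediate vertices are parents of `y`. -/
def VisibleEdge (G : MixedGraph V) (x y : V) : Prop :=
  G.dir x y ∧ ∃ s, s ≠ y ∧ ¬ G.adj s y ∧
    (ArrowInto G s x ∨
      ∃ p, IsColliderPathBetween G p s x ∧
        (∃ (l : List V) (u : V), p = l ++ [u, x] ∧ ArrowInto G u x) ∧
        (∀ w, IsIntermediateOn p w → G.dir w y))

/-- A non-causal path from `x` to `y`: a path between `x` and `y` that is not
a directed path from `x` to `y`. -/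
def NonCausalPath (G : MixedGraph V) (p : List V) (a b : V) : Prop :=
  IsPathBetween G p a b ∧ ¬ IsDirectedPath G p a b

/-- `Z` blocks every non-causal path from `x` to `y`. -/
def BlocksAllNonCausal (G : MixedGraph V) (x y : V) (Z : Set V) : Prop :=
  ∀ p, NonCausalPath G p x y → ¬ MConnPath G Z p x y

/-- `Z` satisfies the generalized adjustment criterion relative to `(x, y)`:
every directed path from `x` to `y` starts with a visible directed edge out of
`x`, `Z` contains no descendant of any vertex lying on a directed path from
`x` to `y`, and `Z` blocks every non-causal path from `x` to `y`. -/
def ValidAdjustment (G : MixedGraph V) (x y : V) (Z : Set V) : Prop :=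
  (∀ (p : List V) (w : V) (l : List V),
      IsDirectedPath G p x y → p = x :: w :: l → VisibleEdge G x w) ∧
  (∀ v ∈ Z, ¬ ∃ (w : V) (p : List V), IsDirectedPath G p x y ∧ w ∈ p ∧ Ancestor G w v) ∧
  BlocksAllNonCausal G x y Z

/-- Pretreatment setup: `G` is a MAG over `V = {x, y} ∪ O`, `x ≠ y`, `y` is
not an ancestor of `x`, and neither `x` nor `y` is an ancestor of any vertex
of `O`. -/
structure Pretreatment (G : MixedGraph V) (x y : V) (O : Set V) : Prop where
  mag : IsMAG G
  ne : x ≠ y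
  x_not_mem : x ∉ O
  y_not_mem : y ∉ O
  cover : (Set.univ : Set V) = {x, y} ∪ O
  y_not_anc_x : ¬ Ancestor G y x
  x_not_anc_O : ∀ v ∈ O, ¬ Ancestor G x v
  y_not_anc_O : ∀ v ∈ O, ¬ Ancestor G y v

-- helpers
lemma lt_of_getElem?_eq_some {l : List V} {i : ℕ} {a : V} (h : l[i]? = some a) :
    i < l.length := by
  by_contra hh
  rw [List.getElem?_eq_none (by omega)] at h
  cases h

lemma getElem?_decomp {p l₁ l₂ : List V} {u w v : V} (h : p = l₁ ++ u :: w :: v :: l₂) :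
    p[l₁.length]? = some u ∧ p[l₁.length + 1]? = some w ∧ p[l₁.length + 2]? = some v := by
  subst h
  refine ⟨?_, ?_, ?_⟩ <;>
  · rw [List.getElem?_append_right (by omega)]
    simp

lemma decomp_of_getElem? {p : List V} {i : ℕ} {u w v : V}
    (hu : p[i]? = some u) (hw : p[i+1]? = some w) (hv : p[i+2]? = some v) :
    ∃ l₁ l₂, p = l₁ ++ u :: w :: v :: l₂ := by
  have h2 : i + 2 < p.length := lt_of_getElem?_eq_some hv
  have h0 : i < p.length := by omega
  have h1 : i + 1 < p.length := by omega
  rw [List.getElem?_eq_getElem h0] at hu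
  rw [List.getElem?_eq_getElem h1] at hw
  rw [List.getElem?_eq_getElem h2] at hv
  have heq := List.take_append_drop i p
  rw [List.drop_eq_getElem_cons h0, List.drop_eq_getElem_cons h1,
    List.drop_eq_getElem_cons h2] at heq
  obtain rfl : p[i] = u := Option.some_inj.mp hu
  obtain rfl : p[i+1] = w := Option.some_inj.mp hw
  obtain rfl : p[i+2] = v := Option.some_inj.mp hv
  exact ⟨p.take i, p.drop (i+3), heq.symm⟩

lemma isIntermediateOn_iff {p : List V} {w : V} :
    IsIntermediateOn p w ↔ ∃ (i : ℕ) (u v : V),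
      p[i]? = some u ∧ p[i+1]? = some w ∧ p[i+2]? = some v := by
  constructor
  · rintro ⟨u, v, l₁, l₂, rfl⟩
    obtain ⟨h1, h2, h3⟩ := getElem?_decomp rfl
    exact ⟨l₁.length, u, v, h1, h2, h3⟩
  · rintro ⟨i, u, v, hu, hw, hv⟩
    obtain ⟨l₁, l₂, hp⟩ := decomp_of_getElem? hu hw hv
    exact ⟨u, v, l₁, l₂, hp⟩

lemma isColliderOn_iff {G : MixedGraph V} {p : List V} {w : V} :
    IsColliderOn G p w ↔ ∃ (i : ℕ) (u v : V),
      p[i]? = some u ∧ p[i+1]? = some w ∧ p[i+2]? = some v ∧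
      ArrowInto G u w ∧ ArrowInto G v w := by
  constructor
  · rintro ⟨u, v, l₁, l₂, rfl, a1, a2⟩
    obtain ⟨h1, h2, h3⟩ := getElem?_decomp rfl
    exact ⟨l₁.length, u, v, h1, h2, h3, a1, a2⟩
  · rintro ⟨i, u, v, hu, hw, hv, a1, a2⟩
    obtain ⟨l₁, l₂, hp⟩ := decomp_of_getElem? hu hw hv
    exact ⟨u, v, l₁, l₂, hp, a1, a2⟩

lemma chain'_rel {R : V → V → Prop} {p : List V} (h : List.Chain' R p) {i : ℕ} {a b : V}
    (ha : p[i]? = some a) (hb : p[i+1]? = some b) : R a b := by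
  have h1 : i + 1 < p.length := lt_of_getElem?_eq_some hb
  have := List.isChain_iff_getElem.mp h i (by omega)
  rw [List.getElem?_eq_getElem (by omega)] at ha
  rw [List.getElem?_eq_getElem h1] at hb
  obtain rfl : p[i] = a := Option.some_inj.mp ha
  obtain rfl : p[i+1] = b := Option.some_inj.mp hb
  exact this

lemma getElem?_prefix {l t : List V} {i : ℕ} {a : V} (h : l[i]? = some a) :
    (l ++ t)[i]? = some a := by
  rw [List.getElem?_append_left (lt_of_getElem?_eq_some h)]
  exact h

lemma nodup_getElem?_inj {p : List V} (hn : p.Nodup) {i j : ℕ} {a : V}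
    (hi : p[i]? = some a) (hj : p[j]? = some a) : i = j :=
  (List.getElem?_inj (lt_of_getElem?_eq_some hi) hn).mp (hi.trans hj.symm)


lemma ancestor_of_dir {G : MixedGraph V} {a b : V} (h : G.dir a b) : Ancestor G a b := by
  have hne : a ≠ b := fun he => G.dir_irrefl a (he ▸ h)
  exact Or.inr ⟨[a, b], List.isChain_pair.mpr h, by simp [hne], rfl, by simp, by simp⟩

lemma no_intermediate_pair (a b : V) (w : V) : ¬ IsIntermediateOn [a, b] w := by
  rintro ⟨u, v, l₁, l₂, hw⟩
  have := congrArg List.length hw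
  simp at this
  omega

lemma intermediate_of_collider {G : MixedGraph V} {p : List V} {w : V}
    (h : IsColliderOn G p w) : IsIntermediateOn p w := by
  obtain ⟨u, v, l₁, l₂, hp, -, -⟩ := h
  exact ⟨u, v, l₁, l₂, hp⟩

lemma mconnpath_edge {G : MixedGraph V} {Z : Set V} {a b : V}
    (h : G.dir a b) (ha : a ∉ Z) (hb : b ∉ Z) : MConnPath G Z [a, b] a b := by
  have hne : a ≠ b := fun he => G.dir_irrefl a (he ▸ h)
  refine ⟨⟨List.isChain_pair.mpr (Or.inl h), by simp [hne], rfl, by simp, by simp⟩,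
    ha, hb, ?_, ?_⟩
  · intro w hw
    exact absurd hw.1 (no_intermediate_pair a b w)
  · intro w hw
    exact absurd (intermediate_of_collider hw) (no_intermediate_pair a b w)

lemma mconnpath_prefix {G : MixedGraph V} {Z : Set V} {l t : List V} {a b c : V}
    (h : MConnPath G Z (l ++ c :: t) a b) (hl : l ≠ []) (hc : c ∉ Z) :
    MConnPath G Z (l ++ [c]) a c := by
  obtain ⟨⟨hch, hnd, hhd, hlast, hlen⟩, haZ, hbZ, hnc, hcol⟩ := h
  have hpre : (l ++ [c]) ++ t = l ++ c :: t := by simp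
  have hnd' : (l ++ [c]).Nodup :=
    List.Nodup.sublist (List.sublist_append_left (l ++ [c]) t) (hpre.symm ▸ hnd)
  have hq : ∀ (i : ℕ) (x : V), (l ++ [c])[i]? = some x → (l ++ c :: t)[i]? = some x := by
    intro i x hx
    rw [← hpre]
    exact getElem?_prefix hx
  refine ⟨⟨hch.prefix ⟨t, hpre⟩, hnd', ?_, List.getLast?_concat, ?_⟩, haZ, hc, ?_, ?_⟩
  · rw [List.head?_append_of_ne_nil _ hl]
    rw [List.head?_append_of_ne_nil _ hl] at hhd
    exact hhd
  · have := List.length_pos_iff.mpr hl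
    simp only [List.length_append, List.length_cons, List.length_nil]
    omega
  · intro w hw
    obtain ⟨i, u, v, hu, hwi, hv⟩ := isIntermediateOn_iff.mp hw.1
    refine hnc w ⟨isIntermediateOn_iff.mpr ⟨i, u, v, hq i u hu, hq (i+1) w hwi, hq (i+2) v hv⟩, ?_⟩
    intro hcolq
    obtain ⟨j, u', v', hu', hw', hv', a1, a2⟩ := isColliderOn_iff.mp hcolq
    have hij : i + 1 = j + 1 := nodup_getElem?_inj hnd (hq (i+1) w hwi) hw'
    obtain rfl : i = j := by omega
    obtain rfl : u = u' := Option.some_inj.mp ((hq i u hu).symm.trans hu')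
    obtain rfl : v = v' := Option.some_inj.mp ((hq (i+2) v hv).symm.trans hv')
    exact hw.2 (isColliderOn_iff.mpr ⟨i, u, v, hu, hwi, hv, a1, a2⟩)
  · intro w hw
    obtain ⟨i, u, v, hu, hwi, hv, a1, a2⟩ := isColliderOn_iff.mp hw
    exact hcol w (isColliderOn_iff.mpr ⟨i, u, v, hq i u hu, hq (i+1) w hwi, hq (i+2) v hv, a1, a2⟩)

lemma mconnpath_extend {G : MixedGraph V} {Z : Set V} {q : List V} {a x y : V}
    (h : MConnPath G Z q a x) (hdir : G.dir x y) (hy : y ∉ q) (hyZ : y ∉ Z) :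
    MConnPath G Z (q ++ [y]) a y := by
  obtain ⟨⟨hch, hnd, hhd, hlast, hlen⟩, haZ, hxZ, hnc, hcol⟩ := h
  have hqne : q ≠ [] := by rintro rfl; simp at hlen
  have hqlen : 0 < q.length := List.length_pos_iff.mpr hqne
  have hlast' : q[q.length - 1]? = some x := by
    rw [← List.getLast?_eq_getElem?]; exact hlast
  have hnoarrow : ¬ ArrowInto G y x := by
    rintro (h1 | h1)
    · exact G.dir_not_dir x y hdir h1
    · exact G.dir_not_bidir x y hdir (G.bidir_symm y x h1)
  -- if the middle of a window is not x, the whole window lies inside q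
  have hwin : ∀ (i : ℕ) (w : V), (q ++ [y])[i+1]? = some w → i + 2 < q.length + 1 →
      w ≠ x → i + 2 < q.length := by
    intro i w hwi hb hwx
    rcases Nat.lt_or_ge (i+2) q.length with h' | h'
    · exact h'
    · exfalso
      have he : i + 1 = q.length - 1 := by omega
      have h1 : i + 1 < q.length := by omega
      rw [List.getElem?_append_left h1, he, hlast'] at hwi
      exact hwx (Option.some_inj.mp hwi).symm
  refine ⟨⟨?_, ?_, ?_, List.getLast?_concat, ?_⟩, haZ, hyZ, ?_, ?_⟩
  · refine List.isChain_append.mpr ⟨hch, List.isChain_singleton y, ?_⟩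
    intro u hu v hv
    obtain rfl : x = u := Option.some_inj.mp (hlast.symm.trans hu)
    obtain rfl : y = v := Option.some_inj.mp hv.symm |>.symm ▸ rfl
    exact Or.inl hdir
  · rw [List.nodup_append]
    exact ⟨hnd, List.nodup_singleton y, by intro a ha b hb hab; simp at hb; subst hb; subst hab; exact hy ha⟩
  · rw [List.head?_append_of_ne_nil _ hqne]; exact hhd
  · simp only [List.length_append, List.length_cons, List.length_nil]; omega
  · intro w hw
    by_cases hwx : w = x
    · exact hwx ▸ hxZ
    · obtain ⟨i, u, v, hu, hwi, hv⟩ := isIntermediateOn_iff.mp hw.1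
      have hb : i + 2 < q.length + 1 := by simpa using lt_of_getElem?_eq_some hv
      have h2 : i + 2 < q.length := hwin i w hwi hb hwx
      have hu' : q[i]? = some u := by rw [List.getElem?_append_left (by omega)] at hu; exact hu
      have hwi' : q[i+1]? = some w := by
        rw [List.getElem?_append_left (by omega)] at hwi; exact hwi
      have hv' : q[i+2]? = some v := by rw [List.getElem?_append_left h2] at hv; exact hv
      refine hnc w ⟨isIntermediateOn_iff.mpr ⟨i, u, v, hu', hwi', hv'⟩, ?_⟩
      intro hcolq
      obtain ⟨j, u', v', h1, h2', h3, a1, a2⟩ := isColliderOn_iff.mp hcolq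
      exact hw.2 (isColliderOn_iff.mpr ⟨j, u', v', getElem?_prefix h1, getElem?_prefix h2',
        getElem?_prefix h3, a1, a2⟩)
  · intro w hw
    obtain ⟨i, u, v, hu, hwi, hv, a1, a2⟩ := isColliderOn_iff.mp hw
    have hb : i + 2 < q.length + 1 := by simpa using lt_of_getElem?_eq_some hv
    rcases Nat.lt_or_ge (i+2) q.length with h2 | h2
    · have hu' : q[i]? = some u := by rw [List.getElem?_append_left (by omega)] at hu; exact hu
      have hwi' : q[i+1]? = some w := by
        rw [List.getElem?_append_left (by omega)] at hwi; exact hwi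
      have hv' : q[i+2]? = some v := by rw [List.getElem?_append_left h2] at hv; exact hv
      exact hcol w (isColliderOn_iff.mpr ⟨i, u, v, hu', hwi', hv', a1, a2⟩)
    · exfalso
      have he : i + 2 = q.length := by omega
      have h1 : i + 1 < q.length := by omega
      have hwi' : q[i+1]? = some w := by
        rw [List.getElem?_append_left h1] at hwi; exact hwi
      have hie : i + 1 = q.length - 1 := by omega
      rw [hie, hlast'] at hwi'
      obtain rfl : x = w := Option.some_inj.mp hwi'
      have hv' : (q ++ [y])[q.length]? = some v := he ▸ hv
      rw [List.getElem?_concat_length] at hv'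
      obtain rfl : y = v := Option.some_inj.mp hv'
      exact hnoarrow a2


lemma dir_of_R1 {V : Type*} {G : MixedGraph V} {x y : V} {O : Set V}
    (h : Pretreatment G x y O) {S : V} {Z : Set V} (hSx : S ≠ x) (hSy : S ≠ y)
    (hconn : MConn G Z S y) (hsep : MSep G (Z ∪ {x}) S y) : G.dir x y := by
  obtain ⟨p, hp⟩ := hconn
  have hx_nc : IsNonColliderOn G p x := by
    by_contra hxnc
    apply hsep p
    obtain ⟨hpath, hSZ, hyZ, hnc, hcol⟩ := hp
    refine ⟨hpath, ?_, ?_, ?_, ?_⟩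
    · rintro (h1 | h1)
      · exact hSZ h1
      · exact hSx (by simpa using h1)
    · rintro (h1 | h1)
      · exact hyZ h1
      · exact h.ne ((by simpa using h1 : y = x)).symm
    · intro w hw
      rintro (h1 | h1)
      · exact hnc w hw h1
      · obtain rfl : w = x := by simpa using h1
        exact hxnc hw
    · intro w hw
      obtain ⟨d, hd, hda⟩ := hcol w hw
      exact ⟨d, Or.inl hd, hda⟩
  obtain ⟨hpath, hSZ, hyZ, hnc, hcol⟩ := hp
  obtain ⟨hch, hnd, hhd, hlast, hlen⟩ := hpath
  obtain ⟨i, u, v, hu, hwi, hv⟩ := isIntermediateOn_iff.mp hx_nc.1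
  have hnot : ¬ (ArrowInto G u x ∧ ArrowInto G v x) := fun ⟨a1, a2⟩ =>
    hx_nc.2 (isColliderOn_iff.mpr ⟨i, u, v, hu, hwi, hv, a1, a2⟩)
  have hadj1 : G.adj u x := chain'_rel hch hu hwi
  have hadj2 : G.adj x v := chain'_rel hch hwi hv
  have hbound : i + 2 < p.length := lt_of_getElem?_eq_some hv
  have hlast' : p[p.length - 1]? = some y := by
    rw [← List.getLast?_eq_getElem?]; exact hlast
  have hux : u ≠ x := by
    rintro rfl
    have := nodup_getElem?_inj hnd hu hwi; omega
  have huy : u ≠ y := by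
    rintro rfl
    have := nodup_getElem?_inj hnd hu hlast'; omega
  have hvx : v ≠ x := by
    rintro rfl
    have := nodup_getElem?_inj hnd hv hwi; omega
  have tricho : ∀ w : V, w = x ∨ w = y ∨ w ∈ O := by
    intro w
    have hw : w ∈ (Set.univ : Set V) := Set.mem_univ w
    rw [h.cover] at hw
    rw [← or_assoc]; simpa [Set.mem_insert_iff] using hw
  rcases not_and_or.mp hnot with ha | ha
  · exfalso
    have hdxu : G.dir x u := by
      rcases hadj1 with h1 | h1 | h1
      · exact absurd (Or.inl h1) ha
      · exact h1
      · exact absurd (Or.inr h1) ha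
    rcases tricho u with rfl | rfl | hmem
    · exact hux rfl
    · exact huy rfl
    · exact h.x_not_anc_O u hmem (ancestor_of_dir hdxu)
  · have hdxv : G.dir x v := by
      rcases hadj2 with h1 | h1 | h1
      · exact h1
      · exact absurd (Or.inl h1) ha
      · exact absurd (Or.inr (G.bidir_symm _ _ h1)) ha
    rcases tricho v with rfl | rfl | hmem
    · exact absurd rfl hvx
    · exact hdxv
    · exact absurd (ancestor_of_dir hdxv) (h.x_not_anc_O v hmem)


/-- Mutual exclusivity of rules R1 and R2. -/
theorem rules_R1_R2_mutually_exclusive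
    {V : Type*} [Fintype V] (G : MixedGraph V) (x y : V) (O : Set V)
    (h : Pretreatment G x y O) (S : V) (Z : Set V)
    (hS : S ∈ MarkovBlanket G x \ {y})
    (hZ : Z ⊆ MarkovBlanket G y \ {x})
    (hconn : MConn G Z S y)
    (hsep : MSep G (Z ∪ {x}) S y) :
    ¬ ∃ S' ∈ MarkovBlanket G x \ {y}, ∃ Z' ⊆ MarkovBlanket G y \ {x},
        MSep G Z' x y ∨ (MConn G Z' S' x ∧ MSep G Z' S' y) := by
  rintro ⟨S', hS', Z', hZ', hcase⟩
  obtain ⟨hSmb, hSy0⟩ := hS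
  have hSx : S ≠ x := hSmb.1
  have hSy : S ≠ y := by simpa using hSy0
  have hdir : G.dir x y := dir_of_R1 h hSx hSy hconn hsep
  have hxZ' : x ∉ Z' := fun hx => (hZ' hx).2 rfl
  have hyZ' : y ∉ Z' := fun hy => ((hZ' hy).1).1 rfl
  have hS'y : S' ≠ y := by simpa using hS'.2
  rcases hcase with hsep' | ⟨hconn', hsep'⟩
  · exact hsep' [x, y] (mconnpath_edge hdir hxZ' hyZ')
  · obtain ⟨q, hq⟩ := hconn'
    by_cases hy : y ∈ q
    · obtain ⟨l, t, rfl⟩ := List.append_of_mem hy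
      have hl : l ≠ [] := by
        rintro rfl
        have hh := hq.1.2.2.1
        simp at hh
        exact hS'y hh.symm
      exact hsep' _ (mconnpath_prefix hq hl hyZ')
    · exact hsep' _ (mconnpath_extend hq hdir hy hyZ')


end CausalGraph
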